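/- Let g = (g_{ij}) ∈ SL(3,ℂ) and let z be the lower unipotent matrix with subdiagonal entries z_{21}, z_{31}, z_{32} ∈ ℂ. Set D₁ := det(g_{22},g_{23};g_{32},g_{33}) + det(g_{12},g_{13};g_{32},g_{33})·z_{21} + det(g_{12},g_{13};g_{22},g_{23})·(z_{21}z_{32} − z_{31}) and D₂ := g_{33} + g_{23}z_{32} + g_{13}z_{31}, and assume D₁ ≠ 0 and D₂ ≠ 0. Then there exist k_{12}, k_{13}, k_{23} ∈ ℂ such that z·g = k·z', where k is the upper triangular matrix with diagonal entries k_{11} = 1/D₁, k_{22} = D₁/D₂, k_{33} = D₂ and upper entries k_{12}, k_{13}, k_{23}, and z' is the lower unipotent matrix with entries z'_{21} = [det(g_{21},g_{23};g_{31},g_{33}) + det(g_{11},g_{13};g_{31},g_{33})·z_{21} + det(g_{11},g_{13};g_{21},g_{23})·(z_{21}z_{32} − z_{31})]/D₁, z'_{31} = (g_{31} + g_{21}z_{32} + g_{11}z_{31})/D₂, z'_{32} = (g_{32} + g_{22}z_{32} + g_{12}z_{31})/D₂. -/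

import Mathlib

/-!
A matrix `h` whose trailing principal minors `d = h₃₃` and `m = det(h₂₂,h₂₃;h₃₂,h₃₃)` are
nonzero factors as an upper triangular matrix with diagonal `(det h / m, m / d, d)` times a lower
unipotent one, read off column by column from the right. Apply this to `h = z·g`, which still has
determinant one: left multiplication by `z` adds multiples of earlier rows to later ones, so
expanding the minors of `z·g` by multilinearity in the rows gives `D₁`, `D₂` and the entries of `z'`.
-/

open Matrix

noncomputable section

def det2 (a b c d : ℂ) : ℂ := a * d - b * c

theorem exists_upperTriangular_mul_lowerUnipotent_fin_three {K : Type*} [Field K]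
    (h : Matrix (Fin 3) (Fin 3) K)
    {m d : K} (hm_def : m = h 1 1 * h 2 2 - h 1 2 * h 2 1) (hd_def : d = h 2 2)
    (hm : m ≠ 0) (hd : d ≠ 0) :
    ∃ k₁₂ k₁₃ k₂₃ : K,
      h = !![h.det / m, k₁₂, k₁₃; 0, m / d, k₂₃; 0, 0, d]
        * !![1, 0, 0; (h 1 0 * h 2 2 - h 1 2 * h 2 0) / m, 1, 0; h 2 0 / d, h 2 1 / d, 1] := by
  refine ⟨h 0 1 - h 0 2 * h 2 1 / d, h 0 2, h 1 2, ?_⟩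
  subst hm_def hd_def
  ext i j
  fin_cases i <;> fin_cases j <;>
    simp only [mul_apply, Fin.sum_univ_three, of_apply, cons_val', cons_val_zero, cons_val_one,
      cons_val, cons_val_fin_one, det_fin_three, Fin.isValue, Fin.mk_one, Fin.zero_eta,
      Fin.reduceFinMk] <;>
    field_simp <;> ring

section LowerUnipotent

variable {R : Type*} [CommRing R]

def lowerUnipotent (z₂₁ z₃₁ z₃₂ : R) : Matrix (Fin 3) (Fin 3) R :=
  !![1, 0, 0; z₂₁, 1, 0; z₃₁, z₃₂, 1]

@[simp]
theorem det_lowerUnipotent (z₂₁ z₃₁ z₃₂ : R) : (lowerUnipotent z₂₁ z₃₁ z₃₂).det = 1 := by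
  simp [lowerUnipotent, det_fin_three]

theorem lowerUnipotent_mul_apply_two (z₂₁ z₃₁ z₃₂ : R) (g : Matrix (Fin 3) (Fin 3) R)
    (j : Fin 3) :
    (lowerUnipotent z₂₁ z₃₁ z₃₂ * g) 2 j = g 2 j + g 1 j * z₃₂ + g 0 j * z₃₁ := by
  simp only [lowerUnipotent, mul_apply, Fin.sum_univ_three, of_apply, cons_val', cons_val_zero,
    cons_val_one, cons_val, cons_val_fin_one]
  ring

end LowerUnipotent

theorem lowerUnipotent_mul_minor (z₂₁ z₃₁ z₃₂ : ℂ) (g : Matrix (Fin 3) (Fin 3) ℂ) (j k : Fin 3) :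
    (lowerUnipotent z₂₁ z₃₁ z₃₂ * g) 1 j * (lowerUnipotent z₂₁ z₃₁ z₃₂ * g) 2 k
        - (lowerUnipotent z₂₁ z₃₁ z₃₂ * g) 1 k * (lowerUnipotent z₂₁ z₃₁ z₃₂ * g) 2 j
      = det2 (g 1 j) (g 1 k) (g 2 j) (g 2 k) + det2 (g 0 j) (g 0 k) (g 2 j) (g 2 k) * z₂₁
        + det2 (g 0 j) (g 0 k) (g 1 j) (g 1 k) * (z₂₁ * z₃₂ - z₃₁) := by
  simp only [lowerUnipotent, mul_apply, Fin.sum_univ_three, of_apply, cons_val', cons_val_zero,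
    cons_val_one, cons_val, cons_val_fin_one, det2]
  ring

theorem gauss_decomposition_SL3C (g : Matrix.SpecialLinearGroup (Fin 3) ℂ)
    (z₂₁ z₃₁ z₃₂ : ℂ)
    (D₁ : ℂ)
    (hD₁def : D₁ = det2 (g.1 1 1) (g.1 1 2) (g.1 2 1) (g.1 2 2)
      + det2 (g.1 0 1) (g.1 0 2) (g.1 2 1) (g.1 2 2) * z₂₁
      + det2 (g.1 0 1) (g.1 0 2) (g.1 1 1) (g.1 1 2) * (z₂₁ * z₃₂ - z₃₁))
    (D₂ : ℂ)
    (hD₂def : D₂ = g.1 2 2 + g.1 1 2 * z₃₂ + g.1 0 2 * z₃₁)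
    (hD₁ : D₁ ≠ 0) (hD₂ : D₂ ≠ 0) :
    ∃ k₁₂ k₁₃ k₂₃ : ℂ,
      !![1, 0, 0; z₂₁, 1, 0; z₃₁, z₃₂, 1] * g.1
        = !![D₁⁻¹, k₁₂, k₁₃; 0, D₁ / D₂, k₂₃; 0, 0, D₂]
          * !![(1 : ℂ), 0, 0;
               (det2 (g.1 1 0) (g.1 1 2) (g.1 2 0) (g.1 2 2)
                 + det2 (g.1 0 0) (g.1 0 2) (g.1 2 0) (g.1 2 2) * z₂₁
                 + det2 (g.1 0 0) (g.1 0 2) (g.1 1 0) (g.1 1 2) * (z₂₁ * z₃₂ - z₃₁)) / D₁,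
               1, 0;
               (g.1 2 0 + g.1 1 0 * z₃₂ + g.1 0 0 * z₃₁) / D₂,
               (g.1 2 1 + g.1 1 1 * z₃₂ + g.1 0 1 * z₃₁) / D₂, 1] := by
  change ∃ k₁₂ k₁₃ k₂₃ : ℂ, lowerUnipotent z₂₁ z₃₁ z₃₂ * g.1 = _
  have hdet : (lowerUnipotent z₂₁ z₃₁ z₃₂ * g.1).det = 1 := by simp
  rw [← lowerUnipotent_mul_minor] at hD₁def
  rw [← lowerUnipotent_mul_apply_two] at hD₂def
  obtain ⟨k₁₂, k₁₃, k₂₃, hk⟩ :=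
    exists_upperTriangular_mul_lowerUnipotent_fin_three _ hD₁def hD₂def hD₁ hD₂
  refine ⟨k₁₂, k₁₃, k₂₃, ?_⟩
  rw [hk, hdet, one_div, lowerUnipotent_mul_minor, lowerUnipotent_mul_apply_two,
    lowerUnipotent_mul_apply_two]
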